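/- arXiv:2212.08176 — 2 statements merged into one kernel-verified Lean document; each statement's English description precedes it below -/
import Mathlib

section
/- Let f, g ∈ B^θ_{p,∞}(ℝ^d) ∩ B^β_{p',∞}(ℝ^d) appropriately, with θ, β ∈ (0,1). For a standard mollifier ρ_ε, the Constantin–E–Titi commutator satisfies ‖(fg)_ε − f_ε g_ε‖_{L^q} ≤ C ε^{θ+β} [f]_{B^θ_{rq,∞}} [g]_{B^β_{r'q,∞}} for any q, r ∈ [1,∞] with 1/r + 1/r' = 1 and rq, r'q ≥ 1. -/
open MeasureTheory Set Filter
open scoped ENNReal Topology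

noncomputable section

/-- The rescaled mollification kernel `ρ_ε(y) = ε^{-d} ρ(y/ε)`. -/
def mollKer (d : ℕ) (ρ : EuclideanSpace ℝ (Fin d) → ℝ) (ε : ℝ)
    (y : EuclideanSpace ℝ (Fin d)) : ℝ :=
  ε ^ (-(d : ℝ)) * ρ (ε⁻¹ • y)

/-- Mollification `f_ε = f * ρ_ε`. -/
def mollify (d : ℕ) (ρ : EuclideanSpace ℝ (Fin d) → ℝ) (ε : ℝ)
    (f : EuclideanSpace ℝ (Fin d) → ℝ) (x : EuclideanSpace ℝ (Fin d)) : ℝ :=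
  ∫ y, f (x - y) * mollKer d ρ ε y

/-!
Let `ν_ε` be the probability measure with density `ρ_ε`, so that `f_ε x = ∫ f (x - y) dν_ε(y)`, and
write `δ_y f = f (· - y) - f`. Expanding the products under `ν_ε` gives the pointwise identity
`(fg)_ε - f_ε g_ε = ∫ δ_y f · δ_y g dν_ε(y) - (f_ε - f) (g_ε - g)`.
Since `ν_ε` lives on the ball of radius `ε`, Hölder's inequality for `1/q = 1/(rq) + 1/(r'q)` bounds
`‖δ_y f · δ_y g‖_{L^q}` by `ε^{θ+β} [f] [g]` for `ν_ε`-a.e. `y`, and `‖δ_y f‖_{L^{rq}} ≤ ε^θ [f]`.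
Minkowski's integral inequality for the probability measure `ν_ε` carries these bounds through the
`y`-integrals, so both terms are at most `ε^{θ+β} [f] [g]` and `C = 2` works.
-/

section Minkowski

variable {X Y E : Type*} [MeasurableSpace X] [MeasurableSpace Y]
  [NormedAddCommGroup E] [NormedSpace ℝ E] {μ : Measure X} {ν : Measure Y} [IsProbabilityMeasure ν]

lemma rpow_lintegral_le_lintegral_rpow {p : ℝ} (hp : 1 ≤ p) {g : Y → ℝ≥0∞}
    (hg : AEMeasurable g ν) : (∫⁻ y, g y ∂ν) ^ p ≤ ∫⁻ y, g y ^ p ∂ν := by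
  have hp0 : 0 < p := zero_lt_one.trans_le hp
  have h := eLpNorm_le_eLpNorm_of_exponent_le (show (1 : ℝ≥0∞) ≤ ENNReal.ofReal p by simpa)
    hg.aestronglyMeasurable
  rw [eLpNorm_one_eq_lintegral_enorm, eLpNorm_eq_lintegral_rpow_enorm_toReal (by simpa) (by simp),
    ENNReal.toReal_ofReal hp0.le, one_div, ENNReal.le_rpow_inv_iff hp0] at h
  simpa using h

lemma eLpNorm_integral_le_of_ae_eLpNorm_le [SFinite μ] {q : ℝ≥0∞} (hq : 1 ≤ q) {H : X → Y → E}
    (hH : StronglyMeasurable (Function.uncurry H)) {C : ℝ≥0∞}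
    (hC : ∀ᵐ y ∂ν, eLpNorm (fun x => H x y) q μ ≤ C) :
    eLpNorm (fun x => ∫ y, H x y ∂ν) q μ ≤ C := by
  have hHm : Measurable fun z : X × Y => ‖Function.uncurry H z‖ₑ := hH.enorm
  have hint (x : X) : ‖∫ y, H x y ∂ν‖ₑ ≤ ∫⁻ y, ‖H x y‖ₑ ∂ν := enorm_integral_le_lintegral_enorm _
  rcases eq_or_ne q ∞ with rfl | hq_top
  · have hle : ∀ᵐ x ∂μ, ∀ᵐ y ∂ν, ‖H x y‖ₑ ≤ C := by
      rw [Measure.ae_ae_comm (measurableSet_le (f := fun z : X × Y => ‖H z.1 z.2‖ₑ) hHm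
        measurable_const)]
      filter_upwards [hC] with y hy
      exact (ae_le_eLpNormEssSup).mono fun x hx => hx.trans (by rwa [eLpNorm_exponent_top] at hy)
    rw [eLpNorm_exponent_top]
    refine essSup_le_of_ae_le C ?_
    filter_upwards [hle] with x hx
    calc ‖∫ y, H x y ∂ν‖ₑ ≤ ∫⁻ y, ‖H x y‖ₑ ∂ν := hint x
      _ ≤ ∫⁻ _, C ∂ν := lintegral_mono_ae hx
      _ = C := by simp
  · have hq0 : q ≠ 0 := (zero_lt_one.trans_le hq).ne'
    have hp : 1 ≤ q.toReal := by simpa using ENNReal.toReal_mono hq_top hq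
    have hp0 : 0 < q.toReal := zero_lt_one.trans_le hp
    simp only [eLpNorm_eq_lintegral_rpow_enorm_toReal hq0 hq_top,
      one_div, ENNReal.rpow_inv_le_iff hp0] at hC ⊢
    calc ∫⁻ x, ‖∫ y, H x y ∂ν‖ₑ ^ q.toReal ∂μ
        ≤ ∫⁻ x, ∫⁻ y, ‖H x y‖ₑ ^ q.toReal ∂ν ∂μ := by
          gcongr with x
          exact (ENNReal.rpow_le_rpow (hint x) hp0.le).trans
            (rpow_lintegral_le_lintegral_rpow hp (hHm.comp measurable_prodMk_left).aemeasurable)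
      _ = ∫⁻ y, ∫⁻ x, ‖H x y‖ₑ ^ q.toReal ∂μ ∂ν :=
          lintegral_lintegral_swap (hHm.pow_const _).aemeasurable
      _ ≤ ∫⁻ _, C ^ q.toReal ∂ν := lintegral_mono_ae hC
      _ = C ^ q.toReal := by simp

end Minkowski

lemma ENNReal.holderTriple_mul_right {r r' : ℝ≥0∞} (hrr' : r⁻¹ + r'⁻¹ = 1) {q : ℝ≥0∞}
    (hq : q ≠ 0) : ENNReal.HolderTriple (r * q) (r' * q) q where
  inv_add_inv_eq_inv := by
    have hr : r ≠ 0 := by rintro rfl; simp at hrr'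
    have hr' : r' ≠ 0 := by rintro rfl; simp at hrr'
    rw [ENNReal.mul_inv (.inl hr) (.inr hq), ENNReal.mul_inv (.inl hr') (.inr hq), ← add_mul,
      hrr', one_mul]

lemma eLpNorm_mul_le_ofReal_mul {α : Type*} [MeasurableSpace α] {μ : Measure α}
    {p₁ p₂ q : ℝ≥0∞} [ENNReal.HolderTriple p₁ p₂ q] {u v : α → ℝ}
    (hu : AEStronglyMeasurable u μ) (hv : AEStronglyMeasurable v μ) {a b : ℝ} (ha : 0 ≤ a)
    (hua : eLpNorm u p₁ μ ≤ ENNReal.ofReal a) (hvb : eLpNorm v p₂ μ ≤ ENNReal.ofReal b) :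
    eLpNorm (fun x => u x * v x) q μ ≤ ENNReal.ofReal (a * b) := by
  rw [ENNReal.ofReal_mul ha]
  exact (eLpNorm_smul_le_mul_eLpNorm hv hu).trans (mul_le_mul' hua hvb)

lemma integral_sub_const_eq {Y : Type*} [MeasurableSpace Y] {ν : Measure Y}
    [IsProbabilityMeasure ν] {a : Y → ℝ} (ha : Integrable a ν) (a₀ : ℝ) :
    ∫ y, (a y - a₀) ∂ν = ∫ y, a y ∂ν - a₀ := by
  rw [integral_sub ha (integrable_const _), integral_const, probReal_univ, one_smul]

lemma integral_mul_sub_integral_mul_integral {Y : Type*} [MeasurableSpace Y] {ν : Measure Y}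
    [IsProbabilityMeasure ν] {a b : Y → ℝ} (ha : Integrable a ν) (hb : Integrable b ν)
    (hab : Integrable (fun y => a y * b y) ν) (a₀ b₀ : ℝ) :
    ∫ y, a y * b y ∂ν - (∫ y, a y ∂ν) * ∫ y, b y ∂ν
      = ∫ y, (a y - a₀) * (b y - b₀) ∂ν - (∫ y, a y ∂ν - a₀) * (∫ y, b y ∂ν - b₀) := by
  have hexp : (fun y => (a y - a₀) * (b y - b₀))
      = fun y => a y * b y - a₀ * b y - (b₀ * a y - a₀ * b₀) := by
    funext y; ring
  have h₁ : Integrable (fun y => a y * b y - a₀ * b y) ν := hab.sub (hb.const_mul a₀)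
  have h₂ : Integrable (fun y => b₀ * a y - a₀ * b₀) ν := (ha.const_mul b₀).sub (integrable_const _)
  rw [hexp, integral_sub h₁ h₂,
    integral_sub hab (hb.const_mul a₀), integral_sub (ha.const_mul b₀) (integrable_const _),
    integral_const_mul, integral_const_mul, integral_const, probReal_univ, one_smul]
  ring

section Increments

variable {G F : Type*} [NormedAddCommGroup G] [MeasurableSpace G] [NormedAddCommGroup F]
  {μ : Measure G} {p : ℝ≥0∞}

lemma eLpNorm_sub_comp_sub_le {θ N ε : ℝ} (hθ : 0 ≤ θ) (hN : 0 ≤ N) {φ : G → F}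
    (hφ : ∀ h : G, h ≠ 0 →
      eLpNorm (fun x => φ (x + h) - φ x) p μ ≤ ENNReal.ofReal (‖h‖ ^ θ * N))
    {y : G} (hy : ‖y‖ ≤ ε) :
    eLpNorm (fun x => φ (x - y) - φ x) p μ ≤ ENNReal.ofReal (ε ^ θ * N) := by
  rcases eq_or_ne y 0 with rfl | hy0
  · simp
  · have h := hφ (-y) (neg_ne_zero.2 hy0)
    simp only [← sub_eq_add_neg, norm_neg] at h
    exact h.trans (ENNReal.ofReal_le_ofReal (by gcongr))

lemma eLpNorm_sub_comp_add_congr_ae [MeasurableAdd G] [μ.IsAddRightInvariant] {φ ψ : G → F}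
    (h : φ =ᵐ[μ] ψ) (a : G) :
    eLpNorm (fun x => φ (x + a) - φ x) p μ = eLpNorm (fun x => ψ (x + a) - ψ x) p μ := by
  refine eLpNorm_congr_ae ?_
  filter_upwards [(measurePreserving_add_right μ a).quasiMeasurePreserving.ae_eq_comp h, h]
    with x hxa hx
  simp only [Function.comp_apply] at hxa
  rw [hxa, hx]

end Increments

structure IsMollifier {d : ℕ} (ρ : EuclideanSpace ℝ (Fin d) → ℝ) : Prop where
  continuous : Continuous ρ
  nonneg : ∀ y, 0 ≤ ρ y
  support_subset : Function.support ρ ⊆ Metric.ball 0 1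
  integral_eq_one : ∫ y, ρ y = 1

def mollMeasure (d : ℕ) (ρ : EuclideanSpace ℝ (Fin d) → ℝ) (ε : ℝ) :
    Measure (EuclideanSpace ℝ (Fin d)) :=
  volume.withDensity fun y => ENNReal.ofReal (mollKer d ρ ε y)

namespace IsMollifier

variable {d : ℕ} {ρ : EuclideanSpace ℝ (Fin d) → ℝ} (hρ : IsMollifier ρ) {ε : ℝ} (hε : 0 < ε)
include hρ hε

lemma mollKer_nonneg (y : EuclideanSpace ℝ (Fin d)) : 0 ≤ mollKer d ρ ε y :=
  mul_nonneg (Real.rpow_nonneg hε.le _) (hρ.nonneg _)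

lemma mollKer_eq_zero {y : EuclideanSpace ℝ (Fin d)} (hy : ε ≤ ‖y‖) : mollKer d ρ ε y = 0 := by
  suffices ε⁻¹ • y ∉ Function.support ρ by simp_all [mollKer]
  intro hy'
  have h := hρ.support_subset hy'
  rw [mem_ball_zero_iff, norm_smul, Real.norm_of_nonneg (inv_pos.2 hε).le, inv_mul_lt_iff₀ hε,
    mul_one] at h
  exact h.not_ge hy

omit hε in
lemma continuous_mollKer : Continuous (mollKer d ρ ε) := by
  have := hρ.continuous
  unfold mollKer
  fun_prop

lemma hasCompactSupport_mollKer : HasCompactSupport (mollKer d ρ ε) :=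
  HasCompactSupport.intro (isCompact_closedBall 0 ε) fun _ hy =>
    hρ.mollKer_eq_zero hε (not_le.1 (by simpa using hy)).le

lemma integral_mollKer : ∫ y, mollKer d ρ ε y = 1 := by
  have h := Measure.integral_comp_smul (volume : Measure (EuclideanSpace ℝ (Fin d))) ρ ε⁻¹
  rw [hρ.integral_eq_one, finrank_euclideanSpace_fin, inv_pow, inv_inv,
    abs_of_pos (pow_pos hε d), smul_eq_mul, mul_one] at h
  simp only [mollKer]
  rw [integral_const_mul, h, Real.rpow_neg hε.le, Real.rpow_natCast,
    inv_mul_cancel₀ (pow_ne_zero d hε.ne')]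

lemma isProbabilityMeasure_mollMeasure : IsProbabilityMeasure (mollMeasure d ρ ε) := by
  constructor
  rw [mollMeasure, withDensity_apply _ MeasurableSet.univ, setLIntegral_univ,
    ← ofReal_integral_eq_lintegral_ofReal
      ((hρ.continuous_mollKer).integrable_of_hasCompactSupport (hρ.hasCompactSupport_mollKer hε))
      (Eventually.of_forall (hρ.mollKer_nonneg hε)),
    hρ.integral_mollKer hε, ENNReal.ofReal_one]

lemma ae_norm_lt_mollMeasure : ∀ᵐ y ∂mollMeasure d ρ ε, ‖y‖ < ε := by
  refine (ae_withDensity_iff hρ.continuous_mollKer.measurable.ennreal_ofReal).2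
    (Eventually.of_forall fun y hy => ?_)
  by_contra h
  simp [hρ.mollKer_eq_zero hε (not_lt.1 h)] at hy

lemma integral_mollMeasure {E : Type*} [NormedAddCommGroup E] [NormedSpace ℝ E]
    (F : EuclideanSpace ℝ (Fin d) → E) :
    ∫ y, F y ∂mollMeasure d ρ ε = ∫ y, mollKer d ρ ε y • F y := by
  rw [mollMeasure, integral_withDensity_eq_integral_toReal_smul
    (hρ.continuous_mollKer).measurable.ennreal_ofReal (Eventually.of_forall fun _ => by simp)]
  simp only [ENNReal.toReal_ofReal (hρ.mollKer_nonneg hε _)]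

lemma mollify_eq_integral (φ : EuclideanSpace ℝ (Fin d) → ℝ) (x : EuclideanSpace ℝ (Fin d)) :
    mollify d ρ ε φ x = ∫ y, φ (x - y) ∂mollMeasure d ρ ε := by
  simp only [hρ.integral_mollMeasure hε, smul_eq_mul, mollify, mul_comm]

lemma integrable_comp_sub_mollMeasure {φ : EuclideanSpace ℝ (Fin d) → ℝ}
    (hφ : LocallyIntegrable φ volume) (x : EuclideanSpace ℝ (Fin d)) :
    Integrable (fun y => φ (x - y)) (mollMeasure d ρ ε) := by
  have h : ConvolutionExistsAt (mollKer d ρ ε) φ x (ContinuousLinearMap.lsmul ℝ ℝ) volume :=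
    convolutionExistsAt_flip.1 <| (hρ.hasCompactSupport_mollKer hε).convolutionExists_right _ hφ
      hρ.continuous_mollKer x
  rw [mollMeasure, integrable_withDensity_iff_integrable_smul'
    (hρ.continuous_mollKer).measurable.ennreal_ofReal (Eventually.of_forall fun _ => by simp)]
  simp only [ENNReal.toReal_ofReal (hρ.mollKer_nonneg hε _)]
  exact h.integrable

omit hε in
lemma measurable_mollify {φ : EuclideanSpace ℝ (Fin d) → ℝ} (hφ : Measurable φ) :
    Measurable (mollify d ρ ε φ) := by
  have := (hρ.continuous_mollKer (ε := ε)).measurable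
  exact (Measurable.stronglyMeasurable (by fun_prop)).integral_prod_right.measurable

lemma mollify_sub_eq_integral {φ : EuclideanSpace ℝ (Fin d) → ℝ}
    (hφ : LocallyIntegrable φ volume) (x : EuclideanSpace ℝ (Fin d)) :
    mollify d ρ ε φ x - φ x = ∫ y, (φ (x - y) - φ x) ∂mollMeasure d ρ ε := by
  have := hρ.isProbabilityMeasure_mollMeasure hε
  rw [hρ.mollify_eq_integral hε, integral_sub_const_eq (hρ.integrable_comp_sub_mollMeasure hε hφ x)]

lemma mollify_mul_sub_mul_mollify_eq {f g : EuclideanSpace ℝ (Fin d) → ℝ}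
    (hf : LocallyIntegrable f volume) (hg : LocallyIntegrable g volume)
    (hfg : LocallyIntegrable (fun y => f y * g y) volume) (x : EuclideanSpace ℝ (Fin d)) :
    mollify d ρ ε (fun y => f y * g y) x - mollify d ρ ε f x * mollify d ρ ε g x
      = ∫ y, (f (x - y) - f x) * (g (x - y) - g x) ∂mollMeasure d ρ ε
        - (mollify d ρ ε f x - f x) * (mollify d ρ ε g x - g x) := by
  have := hρ.isProbabilityMeasure_mollMeasure hε
  simp only [hρ.mollify_eq_integral hε]
  exact integral_mul_sub_integral_mul_integral (hρ.integrable_comp_sub_mollMeasure hε hf x)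
    (hρ.integrable_comp_sub_mollMeasure hε hg x) (hρ.integrable_comp_sub_mollMeasure hε hfg x)
    (f x) (g x)

lemma ae_eLpNorm_sub_comp_sub_le {p : ℝ≥0∞} {θ N : ℝ} (hθ : 0 ≤ θ) (hN : 0 ≤ N)
    {φ : EuclideanSpace ℝ (Fin d) → ℝ}
    (hB : ∀ h : EuclideanSpace ℝ (Fin d), h ≠ 0 →
      eLpNorm (fun x => φ (x + h) - φ x) p volume ≤ ENNReal.ofReal (‖h‖ ^ θ * N)) :
    ∀ᵐ y ∂mollMeasure d ρ ε,
      eLpNorm (fun x => φ (x - y) - φ x) p volume ≤ ENNReal.ofReal (ε ^ θ * N) := by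
  filter_upwards [hρ.ae_norm_lt_mollMeasure hε] with y hy
  exact eLpNorm_sub_comp_sub_le hθ hN hB hy.le

lemma eLpNorm_mollify_sub_le {p : ℝ≥0∞} (hp : 1 ≤ p) {θ N : ℝ} (hθ : 0 ≤ θ) (hN : 0 ≤ N)
    {φ : EuclideanSpace ℝ (Fin d) → ℝ} (hφm : Measurable φ) (hφ : LocallyIntegrable φ volume)
    (hB : ∀ h : EuclideanSpace ℝ (Fin d), h ≠ 0 →
      eLpNorm (fun x => φ (x + h) - φ x) p volume ≤ ENNReal.ofReal (‖h‖ ^ θ * N)) :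
    eLpNorm (fun x => mollify d ρ ε φ x - φ x) p volume ≤ ENNReal.ofReal (ε ^ θ * N) := by
  have := hρ.isProbabilityMeasure_mollMeasure hε
  simp only [hρ.mollify_sub_eq_integral hε hφ]
  exact eLpNorm_integral_le_of_ae_eLpNorm_le hp (Measurable.stronglyMeasurable (by fun_prop))
    (hρ.ae_eLpNorm_sub_comp_sub_le hε hθ hN hB)

end IsMollifier

lemma mollify_congr_ae {d : ℕ} {ρ : EuclideanSpace ℝ (Fin d) → ℝ} {ε : ℝ}
    {φ ψ : EuclideanSpace ℝ (Fin d) → ℝ} (h : φ =ᵐ[volume] ψ) :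
    mollify d ρ ε φ = mollify d ρ ε ψ := by
  funext x
  refine integral_congr_ae ?_
  filter_upwards [(Measure.measurePreserving_sub_left volume x).quasiMeasurePreserving.ae_eq_comp h]
    with y hy
  simp only [Function.comp_apply] at hy
  rw [hy]

theorem IsMollifier.eLpNorm_mollify_mul_sub_mul_mollify_le {d : ℕ}
    {ρ : EuclideanSpace ℝ (Fin d) → ℝ} (hρ : IsMollifier ρ) {ε : ℝ} (hε : 0 < ε)
    {p₁ p₂ q : ℝ≥0∞} [ENNReal.HolderTriple p₁ p₂ q] (hq : 1 ≤ q)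
    {θ β Nf Ng : ℝ} (hθ : 0 ≤ θ) (hβ : 0 ≤ β) (hNf : 0 ≤ Nf) (hNg : 0 ≤ Ng)
    {f g : EuclideanSpace ℝ (Fin d) → ℝ} (hfm : Measurable f) (hgm : Measurable g)
    (hf : MemLp f p₁ volume) (hg : MemLp g p₂ volume)
    (hBf : ∀ h : EuclideanSpace ℝ (Fin d), h ≠ 0 →
      eLpNorm (fun x => f (x + h) - f x) p₁ volume ≤ ENNReal.ofReal (‖h‖ ^ θ * Nf))
    (hBg : ∀ h : EuclideanSpace ℝ (Fin d), h ≠ 0 →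
      eLpNorm (fun x => g (x + h) - g x) p₂ volume ≤ ENNReal.ofReal (‖h‖ ^ β * Ng)) :
    eLpNorm (fun x => mollify d ρ ε (fun y => f y * g y) x
        - mollify d ρ ε f x * mollify d ρ ε g x) q volume
      ≤ ENNReal.ofReal (2 * ε ^ (θ + β) * Nf * Ng) := by
  have := hρ.isProbabilityMeasure_mollMeasure hε
  have hp₁ : 1 ≤ p₁ := hq.trans (ENNReal.HolderTriple.le p₁ p₂ q)
  have hp₂ : 1 ≤ p₂ := hq.trans (ENNReal.HolderTriple.le p₂ p₁ q)
  have hfl := hf.locallyIntegrable hp₁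
  have hgl := hg.locallyIntegrable hp₂
  have hfgl : LocallyIntegrable (fun y => f y * g y) volume := (hg.mul hf).locallyIntegrable hq
  have hA : eLpNorm (fun x => ∫ y, (f (x - y) - f x) * (g (x - y) - g x) ∂mollMeasure d ρ ε)
      q volume ≤ ENNReal.ofReal (ε ^ θ * Nf * (ε ^ β * Ng)) := by
    refine eLpNorm_integral_le_of_ae_eLpNorm_le hq
      (Measurable.stronglyMeasurable (by fun_prop)) ?_
    filter_upwards [hρ.ae_eLpNorm_sub_comp_sub_le hε hθ hNf hBf,
      hρ.ae_eLpNorm_sub_comp_sub_le hε hβ hNg hBg] with y hfy hgy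
    exact eLpNorm_mul_le_ofReal_mul (by fun_prop) (by fun_prop) (by positivity) hfy hgy
  have hf_err := (hρ.measurable_mollify (ε := ε) hfm).sub hfm
  have hg_err := (hρ.measurable_mollify (ε := ε) hgm).sub hgm
  have hB : eLpNorm (fun x => (mollify d ρ ε f x - f x) * (mollify d ρ ε g x - g x)) q volume
      ≤ ENNReal.ofReal (ε ^ θ * Nf * (ε ^ β * Ng)) :=
    eLpNorm_mul_le_ofReal_mul hf_err.aestronglyMeasurable hg_err.aestronglyMeasurable
      (by positivity)
      (hρ.eLpNorm_mollify_sub_le hε hp₁ hθ hNf hfm hfl hBf)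
      (hρ.eLpNorm_mollify_sub_le hε hp₂ hβ hNg hgm hgl hBg)
  simp only [hρ.mollify_mul_sub_mul_mollify_eq hε hfl hgl hfgl]
  calc _ ≤ _ + _ := eLpNorm_sub_le
        (Measurable.stronglyMeasurable (by fun_prop)).integral_prod_right.aestronglyMeasurable
        (hf_err.mul hg_err).aestronglyMeasurable hq
    _ ≤ _ := add_le_add hA hB
    _ = ENNReal.ofReal (2 * ε ^ (θ + β) * Nf * Ng) := by
      rw [← ENNReal.ofReal_add (by positivity) (by positivity), Real.rpow_add hε]
      ring_nf

theorem stmt2_general (d : ℕ) (ρ : EuclideanSpace ℝ (Fin d) → ℝ)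
    (hρ_smooth : ContDiff ℝ (⊤ : ℕ∞) ρ)
    (hρ_nonneg : ∀ y, 0 ≤ ρ y)
    (hρ_supp : Function.support ρ ⊆ Metric.ball 0 1)
    (hρ_int : ∫ y, ρ y = 1)
    (q r r' : ℝ≥0∞) (hq : 1 ≤ q)
    (hrr' : 1 / r + 1 / r' = 1)
    (θ β : ℝ) (hθ : θ ∈ Ioo (0:ℝ) 1) (hβ : β ∈ Ioo (0:ℝ) 1) :
    ∃ C > 0, ∀ (f g : EuclideanSpace ℝ (Fin d) → ℝ) (Nf Ng : ℝ), 0 ≤ Nf → 0 ≤ Ng →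
      MemLp f (r * q) volume → MemLp g (r' * q) volume →
      (∀ h : EuclideanSpace ℝ (Fin d), h ≠ 0 →
        eLpNorm (fun x => f (x + h) - f x) (r * q) volume ≤ ENNReal.ofReal (‖h‖ ^ θ * Nf)) →
      (∀ h : EuclideanSpace ℝ (Fin d), h ≠ 0 →
        eLpNorm (fun x => g (x + h) - g x) (r' * q) volume ≤ ENNReal.ofReal (‖h‖ ^ β * Ng)) →
      ∀ ε : ℝ, 0 < ε →
        eLpNorm (fun x => mollify d ρ ε (fun y => f y * g y) x
            - mollify d ρ ε f x * mollify d ρ ε g x) q volume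
          ≤ ENNReal.ofReal (C * ε ^ (θ + β) * Nf * Ng) := by
  refine ⟨2, two_pos, fun f g Nf Ng hNf hNg hf hg hBf hBg ε hε => ?_⟩
  have hρ : IsMollifier ρ := ⟨hρ_smooth.continuous, hρ_nonneg, hρ_supp, hρ_int⟩
  have : ENNReal.HolderTriple (r * q) (r' * q) q :=
    ENNReal.holderTriple_mul_right (by simpa only [one_div] using hrr')
      (zero_lt_one.trans_le hq).ne'
  have hff' := hf.aestronglyMeasurable.ae_eq_mk
  have hgg' := hg.aestronglyMeasurable.ae_eq_mk
  rw [mollify_congr_ae (φ := fun y => f y * g y) (hff'.mul hgg'),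
    mollify_congr_ae hff', mollify_congr_ae hgg']
  refine hρ.eLpNorm_mollify_mul_sub_mul_mollify_le hε hq hθ.1.le hβ.1.le hNf hNg
    hf.aestronglyMeasurable.stronglyMeasurable_mk.measurable
    hg.aestronglyMeasurable.stronglyMeasurable_mk.measurable
    (hf.ae_eq hff') (hg.ae_eq hgg') (fun h hh => ?_) (fun h hh => ?_)
  · exact (eLpNorm_sub_comp_add_congr_ae hff' h).symm.trans_le (hBf h hh)
  · exact (eLpNorm_sub_comp_add_congr_ae hgg' h).symm.trans_le (hBg h hh)

/-- the Constantin–E–Titi commutator estimate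
`‖(fg)_ε − f_ε g_ε‖_{L^q} ≤ C ε^{θ+β} [f]_{B^θ_{rq,∞}} [g]_{B^β_{r'q,∞}}`
for Hölder-conjugate `r, r'` with `rq, r'q ≥ 1`. -/
theorem stmt2 (d : ℕ) (ρ : EuclideanSpace ℝ (Fin d) → ℝ)
    (hρ_smooth : ContDiff ℝ (⊤ : ℕ∞) ρ)
    (hρ_nonneg : ∀ y, 0 ≤ ρ y)
    (hρ_supp : Function.support ρ ⊆ Metric.ball 0 1)
    (hρ_int : ∫ y, ρ y = 1)
    (q r r' : ℝ≥0∞) (hq : 1 ≤ q) (hr : 1 ≤ r)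
    (hrr' : 1 / r + 1 / r' = 1) (hrq : 1 ≤ r * q) (hr'q : 1 ≤ r' * q)
    (θ β : ℝ) (hθ : θ ∈ Ioo (0:ℝ) 1) (hβ : β ∈ Ioo (0:ℝ) 1) :
    ∃ C > 0, ∀ (f g : EuclideanSpace ℝ (Fin d) → ℝ) (Nf Ng : ℝ), 0 ≤ Nf → 0 ≤ Ng →
      MemLp f (r * q) volume → MemLp g (r' * q) volume →
      (∀ h : EuclideanSpace ℝ (Fin d), h ≠ 0 →
        eLpNorm (fun x => f (x + h) - f x) (r * q) volume ≤ ENNReal.ofReal (‖h‖ ^ θ * Nf)) →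
      (∀ h : EuclideanSpace ℝ (Fin d), h ≠ 0 →
        eLpNorm (fun x => g (x + h) - g x) (r' * q) volume ≤ ENNReal.ofReal (‖h‖ ^ β * Ng)) →
      ∀ ε : ℝ, 0 < ε →
        eLpNorm (fun x => mollify d ρ ε (fun y => f y * g y) x
            - mollify d ρ ε f x * mollify d ρ ε g x) q volume
          ≤ ENNReal.ofReal (C * ε ^ (θ + β) * Nf * Ng) :=
  stmt2_general d ρ hρ_smooth hρ_nonneg hρ_supp hρ_int q r r' hq hrr' θ β hθ hβ
end
end

section
/- Let S̃ ⊂ 𝕋^d satisfy H^d((S̃)_δ) ≤ C δ^{d−γ} for all small δ > 0 (upper Minkowski dimension at most γ), and let U ∈ L^∞((0,T); Lip(𝕋^d)) with flow φ^U. Then the space–time set S = {(φ^U(x,t), t) : x ∈ S̃, t ∈ (0,T)} satisfies H^{d+1}((S)_{δ,δ}) ≤ C' δ^{d−γ} for all small δ > 0, i.e. S has Eulerian time-stable Minkowski dimension at most γ with instability parameter β = 1, with C' depending on T, ‖U‖_{L^∞_{x,t}}, ‖∇U‖_{L^∞_{x,t}} and C. -/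
/-!
A maximal `δ`-separated subset `F` of `S̃` is a `δ`-net, and its disjoint `δ/2`-balls lie in the
`δ`-neighbourhood of `S̃`, so `#F · δ^d ≲ C δ^(d-γ)`. By Grönwall the time-`t` flow map is
`e^{LT}`-Lipschitz for `t ∈ [0, T]`, and every trajectory is `K`-Lipschitz in time, so the
space–time neighbourhood is covered by the `#F · ⌈T/δ⌉` boxes
`B(φ(p, jδ), (1 + e^{LT} + K)δ) × (jδ - 2δ, jδ + 2δ)`, each of volume `≲ δ^(d+1)`.
-/

open MeasureTheory Set Metric
open scoped ENNReal NNReal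

theorem Metric.exists_maximal_isSeparated {X : Type*} [PseudoEMetricSpace X] (ε : ℝ≥0∞)
    (s : Set X) : ∃ N, Maximal (fun N ↦ N ⊆ s ∧ IsSeparated ε N) N :=
  zorn_subset _ fun c hcs hc ↦
    ⟨⋃₀ c, ⟨sUnion_subset fun _ hN ↦ (hcs hN).1, (pairwise_sUnion hc.directedOn).2
      fun _ hN ↦ (hcs hN).2⟩, fun _ ↦ subset_sUnion_of_mem⟩

theorem Set.finite_of_forall_finset_card_mul_le {α : Type*} {N : Set α} {a b : ℝ≥0∞}
    (ha : a ≠ 0) (hb : b ≠ ∞) (h : ∀ F : Finset α, ↑F ⊆ N → F.card * a ≤ b) : N.Finite := by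
  by_contra hN
  obtain ⟨n, hn⟩ := ENNReal.exists_nat_gt (ENNReal.div_ne_top hb ha)
  obtain ⟨F, hFN, rfl⟩ := Set.Infinite.exists_subset_card_eq hN n
  exact (h F hFN).not_gt ((ENNReal.div_lt_iff (.inl ha) (.inr hb)).1 hn)

section AddHaar

variable {E : Type*} [NormedAddCommGroup E] [MeasurableSpace E] [BorelSpace E]
  (μ : Measure E) [μ.IsAddHaarMeasure]

theorem Finset.card_mul_measure_ball_le_of_isSeparated {s : Set E} {F : Finset E} {ε : ℝ≥0}
    (hFs : ↑F ⊆ s) (hF : IsSeparated ε (F : Set E)) :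
    F.card * μ (ball 0 (ε / 2)) ≤ μ (thickening (ε / 2) s) := by
  have hdisj : (F : Set E).PairwiseDisjoint (ball · (ε / 2)) := fun p hp q hq hpq ↦ by
    have : (ε : ℝ≥0∞) < edist p q := hF hp hq hpq
    rw [edist_nndist, ENNReal.coe_lt_coe, ← NNReal.coe_lt_coe, coe_nndist] at this
    exact ball_disjoint_ball (by linarith)
  calc F.card * μ (ball 0 (ε / 2)) = ∑ p ∈ F, μ (ball p (ε / 2)) := by
        simp [Measure.addHaar_ball_center]
    _ = μ (⋃ p ∈ F, ball p (ε / 2)) :=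
        (measure_biUnion_finset hdisj fun _ _ ↦ measurableSet_ball).symm
    _ ≤ μ (thickening (ε / 2) s) :=
        measure_mono (iUnion₂_subset fun _ hp ↦ ball_subset_thickening (hFs hp) _)

theorem exists_finset_isCover_card_mul_measure_ball_le (s : Set E) {ε : ℝ≥0} (hε : 0 < ε)
    (hs : μ (thickening ε s) ≠ ∞) :
    ∃ F : Finset E, IsCover ε s F ∧ F.card * μ (ball 0 (ε / 2)) ≤ μ (thickening ε s) := by
  obtain ⟨N, hN⟩ := exists_maximal_isSeparated (ε : ℝ≥0∞) s
  have hcard (F : Finset E) (hF : ↑F ⊆ N) :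
      F.card * μ (ball 0 (ε / 2)) ≤ μ (thickening ε s) :=
    (F.card_mul_measure_ball_le_of_isSeparated μ (hF.trans hN.prop.1) (hN.prop.2.subset hF)).trans
      (measure_mono (thickening_mono (half_le_self ε.coe_nonneg) s))
  have hN_fin : N.Finite :=
    finite_of_forall_finset_card_mul_le (measure_ball_pos μ 0 (by positivity)).ne' hs hcard
  exact ⟨hN_fin.toFinset, by simpa using IsCover.of_maximal_isSeparated hN, hcard _ (by simp)⟩

theorem measure_biUnion_ball_prod_ball_le {ι κ : Type*} (I : Finset ι) (J : Finset κ)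
    (c : ι → κ → E) (a : κ → ℝ) (r ρ : ℝ) :
    (μ.prod volume) (⋃ i ∈ I, ⋃ j ∈ J, ball (c i j) r ×ˢ ball (a j) ρ) ≤
      I.card * J.card * (μ (ball 0 r) * ENNReal.ofReal (2 * ρ)) := by
  calc _ ≤ ∑ i ∈ I, ∑ j ∈ J, (μ.prod volume) (ball (c i j) r ×ˢ ball (a j) ρ) :=
        (measure_biUnion_finset_le _ _).trans
          (Finset.sum_le_sum fun _ _ ↦ measure_biUnion_finset_le _ _)
    _ = _ := by simp [Measure.prod_prod, Measure.addHaar_ball_center, Real.volume_ball, mul_assoc]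

end AddHaar

section Flow

variable {E : Type*} [NormedAddCommGroup E] [NormedSpace ℝ E]

theorem dist_le_mul_abs_sub_of_norm_hasDerivAt_le {f f' : ℝ → E} {K : ℝ}
    (hf : ∀ t, HasDerivAt f (f' t) t) (hK : ∀ t, ‖f' t‖ ≤ K) (s t : ℝ) :
    dist (f s) (f t) ≤ K * |s - t| := by
  simpa [dist_eq_norm, Real.norm_eq_abs] using
    convex_univ.norm_image_sub_le_of_norm_hasDerivWithin_le
      (fun u _ ↦ (hf u).hasDerivWithinAt) (fun u _ ↦ hK u) (mem_univ t) (mem_univ s)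

theorem dist_flow_le_exp_mul_dist {U : E → ℝ → E} {φ : E → ℝ → E} {L : ℝ≥0} {T : ℝ}
    (hU : ∀ t, LipschitzWith L (U · t)) (hφ0 : ∀ x, φ x 0 = x)
    (hφ : ∀ x t, HasDerivAt (φ x) (U (φ x t) t) t) (x y : E) {t : ℝ} (ht : t ∈ Icc 0 T) :
    dist (φ x t) (φ y t) ≤ Real.exp (L * T) * dist x y := by
  have := dist_le_of_trajectories_ODE (v := fun s z ↦ U z s) (δ := dist x y) hU
    (fun s _ ↦ (hφ x s).continuousAt.continuousWithinAt) (fun s _ ↦ (hφ x s).hasDerivWithinAt)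
    (fun s _ ↦ (hφ y s).continuousAt.continuousWithinAt) (fun s _ ↦ (hφ y s).hasDerivWithinAt)
    (by rw [hφ0, hφ0]) t ht
  rw [sub_zero, mul_comm] at this
  exact this.trans (by gcongr; exact ht.2)

end Flow

theorem exists_lt_ceil_div_abs_sub_mul_lt {T δ t : ℝ} (hδ : 0 < δ) (ht : t ∈ Ico 0 T) :
    ∃ j < ⌈T / δ⌉₊, |t - j * δ| < δ := by
  refine ⟨⌊t / δ⌋₊, Nat.floor_lt_ceil_of_lt_of_pos ?_ ?_, abs_sub_lt_iff.2 ⟨?_, ?_⟩⟩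
  · exact div_lt_div_of_pos_right ht.2 hδ
  · exact div_pos (ht.1.trans_lt ht.2) hδ
  · have := Nat.lt_floor_add_one (t / δ)
    rw [div_lt_iff₀ hδ] at this
    linarith
  · have := Nat.floor_le (div_nonneg ht.1 hδ.le)
    rw [le_div_iff₀ hδ] at this
    linarith

theorem ceil_div_mul_lt_add {T δ : ℝ} (hT : 0 ≤ T) (hδ : 0 < δ) : ⌈T / δ⌉₊ * δ < T + δ := by
  have := Nat.ceil_lt_add_one (div_nonneg hT hδ.le)
  rwa [← sub_lt_iff_lt_add, lt_div_iff₀ hδ, sub_mul, one_mul, sub_lt_iff_lt_add] at this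

theorem spaceTimeNbhd_subset_iUnion_ball_prod_ball {E : Type*} [SeminormedAddCommGroup E]
    {φ : E → ℝ → E} {S : Set E} {F : Finset E} {T δ Λ K : ℝ} (hδ : 0 < δ) (hΛ : 0 ≤ Λ)
    (hK : 0 ≤ K) (hF : S ⊆ ⋃ p ∈ F, closedBall p δ)
    (hφ_lip : ∀ x y, ∀ t ∈ Ioo 0 T, dist (φ x t) (φ y t) ≤ Λ * dist x y)
    (hφ_time : ∀ x s t, dist (φ x s) (φ x t) ≤ K * |s - t|) :
    {z : E × ℝ | ∃ x ∈ S, ∃ t ∈ Ioo 0 T, ‖z.1 - φ x t‖ < δ ∧ |z.2 - t| < δ} ⊆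
      ⋃ p ∈ F, ⋃ j ∈ Finset.range ⌈T / δ⌉₊,
        ball (φ p (j * δ)) ((1 + Λ + K) * δ) ×ˢ ball ((j : ℝ) * δ) (2 * δ) := by
  rintro ⟨y, τ⟩ ⟨x, hx, t, ht, hy, hτ⟩
  obtain ⟨p, hp, hxp⟩ := mem_iUnion₂.1 (hF hx)
  obtain ⟨j, hj, htj⟩ := exists_lt_ceil_div_abs_sub_mul_lt hδ (Ioo_subset_Ico_self ht)
  refine mem_iUnion₂.2 ⟨p, hp, mem_iUnion₂.2 ⟨j, Finset.mem_range.2 hj, ?_, ?_⟩⟩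
  · calc dist y (φ p (j * δ))
        ≤ dist y (φ x t) + dist (φ x t) (φ p t) + dist (φ p t) (φ p (j * δ)) :=
          dist_triangle4 _ _ _ _
      _ < δ + Λ * δ + K * δ := by
          refine add_lt_add_of_lt_of_le (add_lt_add_of_lt_of_le (by rwa [dist_eq_norm]) ?_) ?_
          · exact (hφ_lip x p t ht).trans (mul_le_mul_of_nonneg_left (mem_closedBall.1 hxp) hΛ)
          · exact (hφ_time p t _).trans (mul_le_mul_of_nonneg_left htj.le hK)
      _ = (1 + Λ + K) * δ := by ring
  · calc dist τ (j * δ) ≤ dist τ t + dist t (j * δ) := dist_triangle _ _ _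
      _ < δ + δ := add_lt_add hτ htj
      _ = 2 * δ := by ring

theorem flow_spaceTimeNbhd_subset_iUnion_ball_prod_ball {E : Type*} [NormedAddCommGroup E]
    [NormedSpace ℝ E] {U φ : E → ℝ → E} {S : Set E} {F : Finset E} {L : ℝ≥0} {T δ K : ℝ}
    (hδ : 0 < δ) (hK : 0 ≤ K) (hUb : ∀ x t, ‖U x t‖ ≤ K) (hU : ∀ t, LipschitzWith L (U · t))
    (hφ0 : ∀ x, φ x 0 = x) (hφ : ∀ x t, HasDerivAt (φ x) (U (φ x t) t) t)
    (hF : S ⊆ ⋃ p ∈ F, closedBall p δ) :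
    {z : E × ℝ | ∃ x ∈ S, ∃ t ∈ Ioo 0 T, ‖z.1 - φ x t‖ < δ ∧ |z.2 - t| < δ} ⊆
      ⋃ p ∈ F, ⋃ j ∈ Finset.range ⌈T / δ⌉₊,
        ball (φ p (j * δ)) ((1 + Real.exp (L * T) + K) * δ) ×ˢ ball ((j : ℝ) * δ) (2 * δ) := by
  have hφ_lip (x y) : ∀ t ∈ Ioo 0 T, dist (φ x t) (φ y t) ≤ Real.exp (L * T) * dist x y :=
    fun t ht ↦ dist_flow_le_exp_mul_dist hU hφ0 hφ x y (Ioo_subset_Icc_self ht)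
  have hφ_time (x) (s t : ℝ) : dist (φ x s) (φ x t) ≤ K * |s - t| :=
    dist_le_mul_abs_sub_of_norm_hasDerivAt_le (hφ x) (fun t ↦ hUb _ t) s t
  exact spaceTimeNbhd_subset_iUnion_ball_prod_ball hδ (Real.exp_pos _).le hK hF hφ_lip hφ_time

theorem stmt16_general (d : ℕ) (T γ C K δ₀ : ℝ) (L : ℝ≥0)
    (hT : 0 < T) (hC : 0 < C) (hK : 0 ≤ K) (hδ₀ : 0 < δ₀)
    (St : Set (EuclideanSpace ℝ (Fin d)))
    (hdim : ∀ δ ∈ Ioo (0:ℝ) δ₀,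
      volume {x : EuclideanSpace ℝ (Fin d) | ∃ y ∈ St, ‖x - y‖ < δ}
        ≤ ENNReal.ofReal (C * δ ^ ((d : ℝ) - γ)))
    (U : EuclideanSpace ℝ (Fin d) → ℝ → EuclideanSpace ℝ (Fin d))
    (hUb : ∀ x t, ‖U x t‖ ≤ K)
    (hUlip : ∀ t : ℝ, LipschitzWith L (fun x => U x t))
    (φ : EuclideanSpace ℝ (Fin d) → ℝ → EuclideanSpace ℝ (Fin d))
    (hφ0 : ∀ x, φ x 0 = x)
    (hφ : ∀ x t, HasDerivAt (φ x) (U (φ x t) t) t) :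
    ∃ C' > 0, ∃ δ₁ > 0, ∀ δ ∈ Ioo (0:ℝ) δ₁,
      volume {z : EuclideanSpace ℝ (Fin d) × ℝ |
          ∃ x ∈ St, ∃ t ∈ Ioo (0:ℝ) T, ‖z.1 - φ x t‖ < δ ∧ |z.2 - t| < δ}
        ≤ ENNReal.ofReal (C' * δ ^ ((d : ℝ) - γ)) := by
  set R := 1 + Real.exp (L * T) + K
  refine ⟨C * (2 * R) ^ d * (4 * (T + 1)), by positivity, min δ₀ 1, by positivity, ?_⟩
  rintro δ ⟨hδ, hδ₁⟩
  have hvol := hdim δ ⟨hδ, hδ₁.trans_le (min_le_left _ _)⟩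
  lift δ to ℝ≥0 using hδ.le
  rw [show {x | ∃ y ∈ St, ‖x - y‖ < (δ : ℝ)} = thickening δ St by
    ext; simp [mem_thickening_iff, dist_eq_norm]] at hvol
  obtain ⟨F, hF, hF_card⟩ := exists_finset_isCover_card_mul_measure_ball_le volume St
    (NNReal.coe_pos.1 hδ) (ne_top_of_le_ne_top ENNReal.ofReal_ne_top hvol)
  have hcover := flow_spaceTimeNbhd_subset_iUnion_ball_prod_ball (T := T) hδ hK hUb hUlip hφ0 hφ
    (isCover_iff_subset_iUnion_closedBall.1 hF)
  have hn : (⌈T / δ⌉₊ : ℝ) * δ ≤ T + 1 := by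
    linarith [ceil_div_mul_lt_add hT.le hδ, hδ₁.trans_le (min_le_right _ _)]
  calc _ ≤ _ := measure_mono hcover
    _ ≤ F.card * ⌈T / δ⌉₊ *
          (volume (ball (0 : EuclideanSpace ℝ (Fin d)) (R * δ)) * ENNReal.ofReal (2 * (2 * δ))) := by
        rw [Measure.volume_eq_prod]
        simpa only [Finset.card_range] using measure_biUnion_ball_prod_ball_le volume F
          (Finset.range ⌈T / δ⌉₊) (fun p j ↦ φ p (j * δ)) (fun j ↦ (j : ℝ) * δ) (R * δ) (2 * δ)
    _ = ENNReal.ofReal ((2 * R) ^ d) *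
          (F.card * volume (ball (0 : EuclideanSpace ℝ (Fin d)) (δ / 2))) *
          ENNReal.ofReal (4 * (⌈T / δ⌉₊ * δ)) := by
        rw [show R * δ = 2 * R * (δ / 2) by ring,
          Measure.addHaar_ball_mul_of_pos _ _ (by positivity), finrank_euclideanSpace_fin,
          show (4 : ℝ) * (⌈T / δ⌉₊ * δ) = ⌈T / δ⌉₊ * (2 * (2 * δ)) by ring,
          ENNReal.ofReal_mul (Nat.cast_nonneg _), ENNReal.ofReal_natCast]
        ring
    _ ≤ ENNReal.ofReal ((2 * R) ^ d) * ENNReal.ofReal (C * δ ^ ((d : ℝ) - γ)) *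
          ENNReal.ofReal (4 * (T + 1)) := by
        gcongr
        exact hF_card.trans hvol
    _ = _ := by
        rw [← ENNReal.ofReal_mul (by positivity), ← ENNReal.ofReal_mul (by positivity)]
        ring_nf

/-- the image in space–time of a set `S̃` of upper Minkowski dimension
at most `γ` under the flow of a bounded, Lipschitz vector field `U` has Eulerian
time-stable Minkowski dimension at most `γ` with instability parameter `β = 1`. -/
theorem stmt16 (d : ℕ) (T γ C K δ₀ : ℝ) (L : ℝ≥0)
    (hT : 0 < T) (hγ0 : 0 ≤ γ) (hγd : γ ≤ d) (hC : 0 < C) (hK : 0 ≤ K) (hδ₀ : 0 < δ₀)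
    (St : Set (EuclideanSpace ℝ (Fin d)))
    (hdim : ∀ δ ∈ Ioo (0:ℝ) δ₀,
      volume {x : EuclideanSpace ℝ (Fin d) | ∃ y ∈ St, ‖x - y‖ < δ}
        ≤ ENNReal.ofReal (C * δ ^ ((d : ℝ) - γ)))
    (U : EuclideanSpace ℝ (Fin d) → ℝ → EuclideanSpace ℝ (Fin d))
    (hUb : ∀ x t, ‖U x t‖ ≤ K)
    (hUlip : ∀ t : ℝ, LipschitzWith L (fun x => U x t))
    (φ : EuclideanSpace ℝ (Fin d) → ℝ → EuclideanSpace ℝ (Fin d))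
    (hφ0 : ∀ x, φ x 0 = x)
    (hφ : ∀ x t, HasDerivAt (φ x) (U (φ x t) t) t) :
    ∃ C' > 0, ∃ δ₁ > 0, ∀ δ ∈ Ioo (0:ℝ) δ₁,
      volume {z : EuclideanSpace ℝ (Fin d) × ℝ |
          ∃ x ∈ St, ∃ t ∈ Ioo (0:ℝ) T, ‖z.1 - φ x t‖ < δ ∧ |z.2 - t| < δ}
        ≤ ENNReal.ofReal (C' * δ ^ ((d : ℝ) - γ)) :=
  stmt16_general d T γ C K δ₀ L hT hC hK hδ₀ St hdim U hUb hUlip φ hφ0 hφ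
end
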